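/- arXiv:2503.23349 — 3 statements merged into one kernel-verified Lean document; each statement's English description precedes it below -/
import Mathlib

section
/- For every real number r ≥ 0, there exists a Dirichlet series f(s) = ∑_{n=1}^∞ a_n n^{-s} with a_n > 0 for all n ≥ 1 such that σ_a(f) − δ_a(f) = r. -/
open scoped BigOperators Classical

noncomputable section

/-- Greatest prime factor of `n`, with the convention `gpf 1 = 1`. -/
def gpf (n : ℕ) : ℕ := if n = 1 then 1 else n.primeFactors.sup id

/-- `nthPrime n` is the `(n+1)`-st prime number `p_{n+1}`, so `nthPrime 0 = 2`. -/
def nthPrime (n : ℕ) : ℕ := Nat.nth Nat.Prime n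

/-- The coefficient sequence `a` restricted to `p`-smooth indices
(indices whose greatest prime factor is at most `p`). -/
def smoothCoeff (p : ℕ) (a : ℕ → ℝ) : ℕ → ℝ := fun j => if gpf j ≤ p then a j else 0

/-- Abscissa of absolute convergence of the Dirichlet series `∑_{n ≥ 1} a n * n ^ (-s)`,
as an extended real number. -/
def sigmaA (a : ℕ → ℝ) : EReal :=
  sInf {x : EReal | ∃ σ : ℝ, x = (σ : EReal) ∧
    Summable fun n : ℕ => a (n + 1) * ((n + 1 : ℕ) : ℝ) ^ (-σ)}

/-- The abscissa `δ_a` of the Dirichlet series `∑_{n ≥ 1} a n * n ^ (-s)`: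
the infimum of those `σ` for which every subseries supported on `p_n`-smooth
indices converges (absolutely). -/
def deltaA (a : ℕ → ℝ) : EReal :=
  sInf {x : EReal | ∃ σ : ℝ, x = (σ : EReal) ∧ ∀ n : ℕ,
    Summable fun j : ℕ => smoothCoeff (nthPrime n) a (j + 1) * ((j + 1 : ℕ) : ℝ) ^ (-σ)}

/-!
The coefficients are `p ^ (r - 1)` at primes `p`, `1` at powers of two and `n ^ (-2)` added
everywhere to make them positive. Since `∑ 1/p` diverges, the primes alone push `σ_a` up to `r`,
while a `p`-smooth subseries sees only finitely many primes, so its convergence is governed by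
the powers of two, i.e. by the geometric series `∑ 2 ^ (-k σ)`: hence `δ_a = 0`.
-/

theorem summable_add_iff_of_nonneg {ι : Type*} {f g : ι → ℝ} (hf : 0 ≤ f) (hg : 0 ≤ g) :
    Summable (f + g) ↔ Summable f ∧ Summable g :=
  ⟨fun h => ⟨h.of_nonneg_of_le hf (le_add_of_nonneg_right hg),
    h.of_nonneg_of_le hg (le_add_of_nonneg_left hf)⟩, fun h => h.1.add h.2⟩

theorem EReal.sInf_setOf_coe_eq {c : ℝ} {P : ℝ → Prop} (h : ∀ σ, P σ ↔ c < σ) :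
    sInf {x : EReal | ∃ σ : ℝ, x = σ ∧ P σ} = c := by
  refine le_antisymm (le_of_forall_gt_imp_ge_of_dense fun y hy => ?_) (le_sInf ?_)
  · obtain ⟨x, hcx, hxy⟩ := EReal.lt_iff_exists_real_btwn.mp hy
    have hx : (x : EReal) ∈ {x : EReal | ∃ σ : ℝ, x = σ ∧ P σ} :=
      ⟨x, rfl, (h x).2 (EReal.coe_lt_coe_iff.mp hcx)⟩
    exact (sInf_le hx).trans hxy.le
  · rintro _ ⟨σ, rfl, hσ⟩
    exact EReal.coe_le_coe_iff.mpr ((h σ).1 hσ).le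

section DirichletTerm

def dirichletTerm (a : ℕ → ℝ) (σ : ℝ) (n : ℕ) : ℝ := a n * (n : ℝ) ^ (-σ)

variable {a b : ℕ → ℝ} {σ : ℝ}

theorem summable_dirichletTerm_succ_iff :
    (Summable fun n : ℕ => a (n + 1) * ((n + 1 : ℕ) : ℝ) ^ (-σ)) ↔
      Summable (dirichletTerm a σ) :=
  summable_nat_add_iff (f := dirichletTerm a σ) 1

theorem dirichletTerm_add : dirichletTerm (a + b) σ = dirichletTerm a σ + dirichletTerm b σ :=
  funext fun n => add_mul (a n) (b n) _

theorem dirichletTerm_indicator (s : Set ℕ) :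
    dirichletTerm (s.indicator a) σ = s.indicator (dirichletTerm a σ) :=
  funext fun _ => (Set.indicator_mul_left s a (fun n : ℕ => (n : ℝ) ^ (-σ))).symm

theorem dirichletTerm_nonneg (ha : 0 ≤ a) : 0 ≤ dirichletTerm a σ :=
  fun n => mul_nonneg (ha n) (Real.rpow_nonneg n.cast_nonneg _)

theorem summable_dirichletTerm_add_iff (ha : 0 ≤ a) (hb : 0 ≤ b) :
    Summable (dirichletTerm (a + b) σ) ↔
      Summable (dirichletTerm a σ) ∧ Summable (dirichletTerm b σ) := by
  rw [dirichletTerm_add]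
  exact summable_add_iff_of_nonneg (dirichletTerm_nonneg ha) (dirichletTerm_nonneg hb)

theorem dirichletTerm_mono (hab : a ≤ b) : dirichletTerm a σ ≤ dirichletTerm b σ :=
  fun n => mul_le_mul_of_nonneg_right (hab n) (Real.rpow_nonneg n.cast_nonneg _)

theorem summable_dirichletTerm_rpow {s : ℝ} (h : s - σ < -1) :
    Summable (dirichletTerm (fun n : ℕ => (n : ℝ) ^ s) σ) := by
  have hterm :
      dirichletTerm (fun n : ℕ => (n : ℝ) ^ s) σ = fun n : ℕ => (n : ℝ) ^ (s - σ) :=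
    funext fun n => (Real.rpow_add' n.cast_nonneg (by linarith)).symm
  rw [hterm]
  exact Real.summable_nat_rpow.mpr h

theorem sigmaA_eq_of_summable_iff {c : ℝ} (h : ∀ σ, Summable (dirichletTerm a σ) ↔ c < σ) :
    sigmaA a = c :=
  EReal.sInf_setOf_coe_eq fun σ => summable_dirichletTerm_succ_iff.trans (h σ)

theorem deltaA_eq_of_summable_iff {c : ℝ}
    (h : ∀ n σ, Summable (dirichletTerm (smoothCoeff (nthPrime n) a) σ) ↔ c < σ) :
    deltaA a = c :=
  EReal.sInf_setOf_coe_eq fun σ => by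
    simp only [summable_dirichletTerm_succ_iff, h]
    exact ⟨fun hc => hc 0, fun hc _ => hc⟩

end DirichletTerm

def primeCoeff (r : ℝ) : ℕ → ℝ := {p | p.Prime}.indicator fun n => (n : ℝ) ^ (r - 1)

def powTwoCoeff : ℕ → ℝ := (Set.range (2 ^ · : ℕ → ℕ)).indicator 1

def gapCoeff (r : ℝ) : ℕ → ℝ :=
  primeCoeff r + powTwoCoeff + fun n : ℕ => (n : ℝ) ^ (-2 : ℝ)

theorem primeCoeff_nonneg (r : ℝ) : 0 ≤ primeCoeff r :=
  Set.indicator_nonneg fun _ _ => Real.rpow_nonneg (Nat.cast_nonneg _) _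

theorem powTwoCoeff_nonneg : 0 ≤ powTwoCoeff :=
  Set.indicator_nonneg fun _ _ => zero_le_one

theorem natCast_rpow_nonneg (s : ℝ) : 0 ≤ fun n : ℕ => (n : ℝ) ^ s :=
  fun n => Real.rpow_nonneg n.cast_nonneg s

theorem gapCoeff_pos (r : ℝ) {n : ℕ} (hn : 1 ≤ n) : 0 < gapCoeff r n :=
  add_pos_of_nonneg_of_pos (add_nonneg (primeCoeff_nonneg r n) (powTwoCoeff_nonneg n))
    (Real.rpow_pos_of_pos (Nat.cast_pos.mpr hn) _)

theorem summable_dirichletTerm_primeCoeff {r σ : ℝ} :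
    Summable (dirichletTerm (primeCoeff r) σ) ↔ r < σ := by
  rw [primeCoeff, dirichletTerm_indicator, ← summable_subtype_iff_indicator]
  have hterm (p : Nat.Primes) :
      dirichletTerm (fun n => (n : ℝ) ^ (r - 1)) σ p = (p : ℝ) ^ (r - 1 - σ) :=
    (Real.rpow_add (Nat.cast_pos.mpr p.2.pos) _ _).symm
  change Summable (fun p : Nat.Primes => dirichletTerm _ σ p) ↔ _
  simp only [hterm, Nat.Primes.summable_rpow]
  constructor <;> intro h <;> linarith

theorem summable_dirichletTerm_powTwoCoeff {σ : ℝ} :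
    Summable (dirichletTerm powTwoCoeff σ) ↔ 0 < σ := by
  rw [powTwoCoeff, dirichletTerm_indicator, ← Function.Injective.summable_iff
    (Nat.pow_right_injective le_rfl) fun _ hx => Set.indicator_of_notMem hx _]
  have hterm : (Set.range (2 ^ · : ℕ → ℕ)).indicator (dirichletTerm 1 σ) ∘ (2 ^ ·) =
      fun k : ℕ => ((2 : ℝ) ^ (-σ)) ^ k := by
    funext k
    rw [Function.comp_apply, Set.indicator_of_mem (Set.mem_range_self k), dirichletTerm,
      Pi.one_apply, one_mul, Nat.cast_pow, Nat.cast_ofNat, ← Real.rpow_natCast_mul zero_le_two,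
      ← Real.rpow_mul_natCast zero_le_two, mul_comm]
  rw [hterm, summable_geometric_iff_norm_lt_one,
    Real.norm_of_nonneg (Real.rpow_nonneg zero_le_two _), ← Real.rpow_zero 2,
    Real.rpow_lt_rpow_left_iff one_lt_two, neg_lt_zero]

theorem summable_dirichletTerm_gapCoeff {r σ : ℝ} :
    Summable (dirichletTerm (gapCoeff r) σ) ↔ r < σ ∧ 0 < σ := by
  rw [gapCoeff, summable_dirichletTerm_add_iff
      (add_nonneg (primeCoeff_nonneg r) powTwoCoeff_nonneg) (natCast_rpow_nonneg _),
    summable_dirichletTerm_add_iff (primeCoeff_nonneg r) powTwoCoeff_nonneg,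
    summable_dirichletTerm_primeCoeff, summable_dirichletTerm_powTwoCoeff]
  exact and_iff_left_of_imp fun h => summable_dirichletTerm_rpow (by linarith [h.2])

section Smooth

theorem gpf_prime {p : ℕ} (hp : p.Prime) : gpf p = p := by
  rw [gpf, if_neg hp.one_lt.ne', hp.primeFactors, Finset.sup_singleton, id]

theorem gpf_two_pow_le (k : ℕ) : gpf (2 ^ k) ≤ 2 := by
  rcases eq_or_ne k 0 with rfl | hk
  · simp [gpf]
  · rw [gpf, if_neg (Nat.one_lt_two_pow hk).ne', Nat.primeFactors_prime_pow hk Nat.prime_two,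
      Finset.sup_singleton, id]

variable {p : ℕ} {a b : ℕ → ℝ}

theorem smoothCoeff_add : smoothCoeff p (a + b) = smoothCoeff p a + smoothCoeff p b := by
  funext j
  simp only [smoothCoeff, Pi.add_apply]
  split_ifs <;> simp

theorem smoothCoeff_le (ha : 0 ≤ a) : smoothCoeff p a ≤ a := by
  intro j
  unfold smoothCoeff
  split_ifs
  exacts [le_rfl, ha j]

theorem smoothCoeff_nonneg (ha : 0 ≤ a) : 0 ≤ smoothCoeff p a := by
  intro j
  unfold smoothCoeff
  split_ifs
  exacts [ha j, le_rfl]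

theorem smoothCoeff_powTwoCoeff (hp : 2 ≤ p) : smoothCoeff p powTwoCoeff = powTwoCoeff := by
  funext j
  unfold smoothCoeff
  split_ifs with hj
  · rfl
  · refine (Set.indicator_of_notMem ?_ _).symm
    rintro ⟨k, rfl⟩
    exact hj ((gpf_two_pow_le k).trans hp)

theorem smoothCoeff_primeCoeff_eq_zero (r : ℝ) {j : ℕ} (hj : p < j) :
    smoothCoeff p (primeCoeff r) j = 0 := by
  unfold smoothCoeff
  split_ifs with hgpf
  · refine Set.indicator_of_notMem (fun hprime => ?_) _
    rw [gpf_prime hprime] at hgpf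
    omega
  · rfl

theorem summable_dirichletTerm_smoothCoeff_primeCoeff (r σ : ℝ) :
    Summable (dirichletTerm (smoothCoeff p (primeCoeff r)) σ) :=
  summable_of_ne_finset_zero (s := Finset.range (p + 1)) fun j hj => by
    rw [dirichletTerm, smoothCoeff_primeCoeff_eq_zero r (by simpa using hj), zero_mul]

theorem summable_dirichletTerm_smoothCoeff_gapCoeff {r σ : ℝ} (hp : 2 ≤ p) :
    Summable (dirichletTerm (smoothCoeff p (gapCoeff r)) σ) ↔ 0 < σ := by
  rw [gapCoeff, smoothCoeff_add, smoothCoeff_add, smoothCoeff_powTwoCoeff hp,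
    summable_dirichletTerm_add_iff
      (add_nonneg (smoothCoeff_nonneg (primeCoeff_nonneg r)) powTwoCoeff_nonneg)
      (smoothCoeff_nonneg (natCast_rpow_nonneg _)),
    summable_dirichletTerm_add_iff (smoothCoeff_nonneg (primeCoeff_nonneg r)) powTwoCoeff_nonneg,
    summable_dirichletTerm_powTwoCoeff, and_assoc, and_iff_right_of_imp fun _ =>
      summable_dirichletTerm_smoothCoeff_primeCoeff r σ]
  refine and_iff_left_of_imp fun hσ => ?_
  exact (summable_dirichletTerm_rpow (by linarith)).of_nonneg_of_le
    (dirichletTerm_nonneg (smoothCoeff_nonneg (natCast_rpow_nonneg _)))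
    (dirichletTerm_mono (smoothCoeff_le (natCast_rpow_nonneg _)))

end Smooth

/-- For every real `r ≥ 0` there is a Dirichlet series
`f(s) = ∑_{n ≥ 1} a n * n^{-s}` with positive coefficients, convergent in some right
half-plane, such that `σ_a(f) - δ_a(f) = r`. -/
theorem statement0 (r : ℝ) (hr : 0 ≤ r) :
    ∃ a : ℕ → ℝ, (∀ n : ℕ, 1 ≤ n → 0 < a n) ∧
      (∃ σ : ℝ, Summable fun n : ℕ => a (n + 1) * ((n + 1 : ℕ) : ℝ) ^ (-σ)) ∧
      sigmaA a - deltaA a = (r : EReal) := by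
  have hsigma (σ : ℝ) : Summable (dirichletTerm (gapCoeff r) σ) ↔ r < σ :=
    summable_dirichletTerm_gapCoeff.trans ⟨And.left, fun h => ⟨h, hr.trans_lt h⟩⟩
  refine ⟨gapCoeff r, fun n hn => gapCoeff_pos r hn,
    ⟨r + 1, summable_dirichletTerm_succ_iff.mpr ((hsigma _).mpr (lt_add_one r))⟩, ?_⟩
  rw [sigmaA_eq_of_summable_iff hsigma, deltaA_eq_of_summable_iff (c := 0) fun n _ =>
    summable_dirichletTerm_smoothCoeff_gapCoeff (Nat.prime_nth_prime n).two_le]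
  simp
end
end

section
/- For r ≥ 0 and f(s) = ζ(s − r + 1)(1 + ∑_{n=1}^∞ p_n^{r−1−s}/(1 − p_n^{-s})) = ∑_{m=1}^∞ c_m m^{-s}, the coefficient of f at any prime p satisfies c_p = 2 p^{r−1}, and the coefficient at any power of 2 satisfies c_{2^m} ≥ 2^{r−1} for all integers m ≥ 1. -/
open scoped BigOperators Classical

noncomputable section

/-- Coefficients of `g(s) = ∑_n p_n^{r-1-s}/(1 - p_n^{-s})`. -/
def gCoeff (r : ℝ) : ℕ → ℝ := fun m => if IsPrimePow m then (m.minFac : ℝ) ^ (r - 1) else 0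

/-- Coefficients of `1 + g(s)`. -/
def onePlusGCoeff (r : ℝ) : ℕ → ℝ := fun m => (if m = 1 then 1 else 0) + gCoeff r m

/-- Coefficients of `f(s) = ζ(s - r + 1) * (1 + g(s))`, obtained by multiplying out
(Dirichlet convolution of) `∑_{m ≥ 1} m^{r-1} m^{-s}` and `1 + g(s)`. -/
def fCoeff (r : ℝ) : ℕ → ℝ :=
  fun m => ∑ d ∈ m.divisors, ((m / d : ℕ) : ℝ) ^ (r - 1) * onePlusGCoeff r d

theorem onePlusGCoeff_one (r : ℝ) : onePlusGCoeff r 1 = 1 := by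
  simp [onePlusGCoeff, gCoeff, not_isPrimePow_one]

theorem onePlusGCoeff_of_isPrimePow (r : ℝ) {n : ℕ} (hn : IsPrimePow n) :
    onePlusGCoeff r n = (n.minFac : ℝ) ^ (r - 1) := by
  simp [onePlusGCoeff, gCoeff, hn, hn.ne_one]

theorem onePlusGCoeff_nonneg (r : ℝ) (n : ℕ) : 0 ≤ onePlusGCoeff r n := by
  unfold onePlusGCoeff gCoeff
  split_ifs <;> positivity

theorem fCoeff_prime (r : ℝ) {p : ℕ} (hp : p.Prime) : fCoeff r p = 2 * (p : ℝ) ^ (r - 1) := by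
  rw [fCoeff, hp.divisors, Finset.sum_pair hp.ne_one.symm, Nat.div_one, Nat.div_self hp.pos,
    onePlusGCoeff_one, onePlusGCoeff_of_isPrimePow r hp.isPrimePow, hp.minFac_eq]
  push_cast
  rw [Real.one_rpow]
  ring

/-- The `d = n` term of the convolution defining `fCoeff r n`; all other terms are nonnegative. -/
theorem onePlusGCoeff_le_fCoeff (r : ℝ) {n : ℕ} (hn : n ≠ 0) :
    onePlusGCoeff r n ≤ fCoeff r n := by
  have hterm : ((n / n : ℕ) : ℝ) ^ (r - 1) * onePlusGCoeff r n = onePlusGCoeff r n := by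
    rw [Nat.div_self (Nat.pos_of_ne_zero hn), Nat.cast_one, Real.one_rpow, one_mul]
  rw [← hterm]
  refine Finset.single_le_sum (f := fun d => ((n / d : ℕ) : ℝ) ^ (r - 1) * onePlusGCoeff r d)
    (fun d _ => mul_nonneg (by positivity) (onePlusGCoeff_nonneg r d)) ?_
  exact Nat.mem_divisors_self n hn

theorem rpow_le_fCoeff_prime_pow (r : ℝ) {p k : ℕ} (hp : p.Prime) (hk : k ≠ 0) :
    (p : ℝ) ^ (r - 1) ≤ fCoeff r (p ^ k) := by
  have hpk : IsPrimePow (p ^ k) := hp.isPrimePow.pow hk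
  calc (p : ℝ) ^ (r - 1) = onePlusGCoeff r (p ^ k) := by
        rw [onePlusGCoeff_of_isPrimePow r hpk, Nat.pow_minFac hk, hp.minFac_eq]
    _ ≤ fCoeff r (p ^ k) := onePlusGCoeff_le_fCoeff r hpk.ne_zero

theorem statement8_general (r : ℝ) :
    (∀ p : ℕ, p.Prime → fCoeff r p = 2 * (p : ℝ) ^ (r - 1)) ∧
    (∀ m : ℕ, 1 ≤ m → (2 : ℝ) ^ (r - 1) ≤ fCoeff r (2 ^ m)) := by
  refine ⟨fun p hp => fCoeff_prime r hp, fun m hm => ?_⟩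
  exact_mod_cast rpow_le_fCoeff_prime_pow r Nat.prime_two (by omega : m ≠ 0)

/-- For `r ≥ 0` and `f(s) = ζ(s-r+1)(1+g(s)) = ∑_m c_m m^{-s}`,
the coefficient at any prime `p` is `c_p = 2 p^{r-1}`, and `c_{2^m} ≥ 2^{r-1}` for all
integers `m ≥ 1`. -/
theorem statement8 (r : ℝ) (hr : 0 ≤ r) :
    (∀ p : ℕ, p.Prime → fCoeff r p = 2 * (p : ℝ) ^ (r - 1)) ∧
    (∀ m : ℕ, 1 ≤ m → (2 : ℝ) ^ (r - 1) ≤ fCoeff r (2 ^ m)) :=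
  statement8_general r
end
end

section
/- Let {a_n}_{n≥1} ⊆ (0, ∞) with f(s) = ∑_{n=1}^∞ a_n n^{-s} satisfying σ_a(f) < ∞. Then sup over all sequences {b_n} ⊆ ℂ with ∑_{n=1}^∞ |b_n|²/a_n < ∞ of the abscissa σ_a(∑_{n=1}^∞ b_n n^{-s}) equals σ_a(f)/2. In particular, for every ε > 0 the choice b_n = a_n n^{-(σ_a(f)/2 + ε)} satisfies ∑ |b_n|²/a_n < ∞ and yields a Dirichlet series with abscissa of absolute convergence σ_a(f)/2 − ε. -/
open scoped BigOperators Classical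

noncomputable section

/-!
Cauchy–Schwarz in the form `2 |b_n| n^{-σ} ≤ |b_n|²/a_n + a_n n^{-2σ}` shows that every
`b` with `∑ |b_n|²/a_n < ∞` converges absolutely wherever `f` does at twice the abscissa, so
`σ_a(b) ≤ σ_a(f)/2`. Conversely `b_n = a_n n^{-t}` satisfies `∑ |b_n|²/a_n < ∞` as soon as `2t > σ_a(f)`,
and multiplying coefficients by `n^{-t}` shifts the abscissa by `-t`, so these `b` have
abscissae arbitrarily close to `σ_a(f)/2`.
-/

theorem summable_mul_rpow_neg_of_le {c : ℕ → ℝ} (hc : ∀ n, 0 ≤ c (n + 1)) {σ σ' : ℝ}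
    (hσ : σ ≤ σ') (hs : Summable fun n : ℕ => c (n + 1) * ((n + 1 : ℕ) : ℝ) ^ (-σ)) :
    Summable fun n : ℕ => c (n + 1) * ((n + 1 : ℕ) : ℝ) ^ (-σ') := by
  refine hs.of_nonneg_of_le (fun n => mul_nonneg (hc n) (by positivity)) fun n => ?_
  gcongr
  · exact hc n
  · exact_mod_cast Nat.le_add_left 1 n

theorem summable_of_sigmaA_lt {c : ℕ → ℝ} (hc : ∀ n, 0 ≤ c (n + 1)) {σ : ℝ}
    (h : sigmaA c < σ) : Summable fun n : ℕ => c (n + 1) * ((n + 1 : ℕ) : ℝ) ^ (-σ) := by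
  obtain ⟨_, ⟨σ₀, rfl, hs⟩, hσ₀⟩ := sInf_lt_iff.mp h
  exact summable_mul_rpow_neg_of_le hc (EReal.coe_le_coe_iff.mp hσ₀.le) hs

theorem coe_le_sigmaA_iff (c : ℕ → ℝ) (z : ℝ) :
    (z : EReal) ≤ sigmaA c ↔
      ∀ σ : ℝ, (Summable fun n : ℕ => c (n + 1) * ((n + 1 : ℕ) : ℝ) ^ (-σ)) → z ≤ σ := by
  refine le_sInf_iff.trans ⟨fun h σ hσ => ?_, ?_⟩
  · exact EReal.coe_le_coe_iff.mp (h _ ⟨σ, rfl, hσ⟩)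
  · rintro h _ ⟨σ, rfl, hσ⟩
    exact EReal.coe_le_coe_iff.mpr (h σ hσ)

theorem sigmaA_congr {c d : ℕ → ℝ} (h : ∀ n, c (n + 1) = d (n + 1)) : sigmaA c = sigmaA d := by
  simp only [sigmaA, h]

theorem sigmaA_mul_rpow_neg (c : ℕ → ℝ) (t : ℝ) :
    sigmaA (fun n => c n * (n : ℝ) ^ (-t)) = sigmaA c - t := by
  have hshift : ∀ σ : ℝ, (fun n : ℕ => c (n + 1) * ((n + 1 : ℕ) : ℝ) ^ (-t) *
      ((n + 1 : ℕ) : ℝ) ^ (-σ)) = fun n : ℕ => c (n + 1) * ((n + 1 : ℕ) : ℝ) ^ (-(t + σ)) := by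
    intro σ
    funext n
    rw [mul_assoc, ← Real.rpow_add (by positivity), neg_add]
  have hlower : ∀ z : ℝ, (z : EReal) ≤ sigmaA (fun n => c n * (n : ℝ) ^ (-t)) ↔
      (z : EReal) ≤ sigmaA c - t := by
    intro z
    rw [EReal.le_sub_iff_add_le (.inl (EReal.coe_ne_bot t)) (.inl (EReal.coe_ne_top t)),
      ← EReal.coe_add, coe_le_sigmaA_iff, coe_le_sigmaA_iff]
    simp only [hshift]
    refine ⟨fun h σ hσ => ?_, fun h σ hσ => ?_⟩
    · have := h (σ - t) (by simpa using hσ)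
      linarith
    · linarith [h (t + σ) hσ]
  exact le_antisymm
    (EReal.ge_of_forall_gt_iff_ge.mp fun z hz => (hlower z).mp hz.le)
    (EReal.ge_of_forall_gt_iff_ge.mp fun z hz => (hlower z).mpr hz.le)

theorem two_mul_mul_le_sq_div_add_mul_sq {A : ℝ} (hA : 0 < A) (x t : ℝ) :
    2 * x * t ≤ x ^ 2 / A + A * t ^ 2 := by
  rw [div_add' _ _ _ hA.ne', le_div_iff₀ hA]
  nlinarith [sq_nonneg (x - A * t)]

theorem summable_norm_mul_rpow_neg {E : Type*} [SeminormedAddCommGroup E] {a : ℕ → ℝ}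
    (ha : ∀ n, 0 < a (n + 1)) {b : ℕ → E}
    (hb : Summable fun n : ℕ => ‖b (n + 1)‖ ^ 2 / a (n + 1)) {σ : ℝ}
    (hσ : Summable fun n : ℕ => a (n + 1) * ((n + 1 : ℕ) : ℝ) ^ (-(2 * σ))) :
    Summable fun n : ℕ => ‖b (n + 1)‖ * ((n + 1 : ℕ) : ℝ) ^ (-σ) := by
  refine ((hb.add hσ).div_const 2).of_nonneg_of_le (fun n => by positivity) fun n => ?_
  have hsq : ((n + 1 : ℕ) : ℝ) ^ (-(2 * σ)) = (((n + 1 : ℕ) : ℝ) ^ (-σ)) ^ 2 := by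
    rw [← Real.rpow_natCast, ← Real.rpow_mul (by positivity)]
    ring_nf
  rw [hsq, le_div_iff₀ two_pos, mul_comm]
  simpa [mul_assoc] using two_mul_mul_le_sq_div_add_mul_sq (ha n) ‖b (n + 1)‖
    (((n + 1 : ℕ) : ℝ) ^ (-σ))

theorem sigmaA_norm_le_half_sigmaA {E : Type*} [SeminormedAddCommGroup E] {a : ℕ → ℝ}
    (ha : ∀ n, 0 < a (n + 1)) {b : ℕ → E}
    (hb : Summable fun n : ℕ => ‖b (n + 1)‖ ^ 2 / a (n + 1)) :
    sigmaA (fun n => ‖b n‖) ≤ sigmaA a / 2 := by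
  refine EReal.le_of_forall_lt_iff_le.mp fun z hz => sInf_le ⟨z, rfl, ?_⟩
  refine summable_norm_mul_rpow_neg ha hb (summable_of_sigmaA_lt (fun n => (ha n).le) ?_)
  rw [EReal.div_lt_iff two_pos (EReal.coe_ne_top 2), mul_comm] at hz
  exact_mod_cast hz

theorem summable_mul_rpow_neg_sq_div {a : ℕ → ℝ} (ha : ∀ n, 0 < a (n + 1)) {t : ℝ}
    (ht : sigmaA a < (2 * t : ℝ)) :
    Summable fun n : ℕ => (a (n + 1) * ((n + 1 : ℕ) : ℝ) ^ (-t)) ^ 2 / a (n + 1) := by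
  refine (summable_of_sigmaA_lt (fun n => (ha n).le) ht).congr fun n => ?_
  rw [mul_pow, sq (a (n + 1)), mul_assoc, mul_div_cancel_left₀ _ (ha n).ne',
    ← Real.rpow_natCast, ← Real.rpow_mul (by positivity)]
  ring_nf

theorem exists_sigmaA_norm_eq {a : ℕ → ℝ} (ha : ∀ n, 0 < a (n + 1)) {σf t : ℝ}
    (hσf : sigmaA a = σf) (ht : σf < 2 * t) :
    ∃ b : ℕ → ℂ, (Summable fun n : ℕ => ‖b (n + 1)‖ ^ 2 / a (n + 1)) ∧
      sigmaA (fun n => ‖b n‖) = ((σf - t : ℝ) : EReal) := by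
  refine ⟨fun n => ((a n * (n : ℝ) ^ (-t) : ℝ) : ℂ), ?_, ?_⟩
  · refine (summable_mul_rpow_neg_sq_div ha (by rw [hσf]; exact_mod_cast ht)).congr fun n => ?_
    rw [Complex.norm_real, Real.norm_eq_abs, sq_abs]
  · rw [sigmaA_congr (d := fun n => a n * (n : ℝ) ^ (-t)), sigmaA_mul_rpow_neg, hσf,
      EReal.coe_sub]
    intro n
    rw [Complex.norm_real, Real.norm_of_nonneg (mul_nonneg (ha n).le (by positivity))]

/-- Let `a` be positive with `σ_a(f) < ∞`. The supremum, over all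
`b : ℕ → ℂ` with `∑_{n ≥ 1} |b n|²/a n < ∞`, of the abscissas of absolute convergence
`σ_a(∑ b n n^{-s})` equals `σ_a(f)/2` (expressed as `2 * sSup = σ_a(f)`). In particular,
for every `ε > 0` (when `σ_a(f)` is the real number `σf`), the choice
`b n = a n * n^{-(σf/2 + ε)}` satisfies `∑ |b n|²/a n < ∞` and yields a Dirichlet series
with abscissa of absolute convergence `σf/2 - ε`. -/
theorem statement17 (a : ℕ → ℝ) (hpos : ∀ n : ℕ, 1 ≤ n → 0 < a n)
    (hfin : sigmaA a < ⊤) :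
    2 * sSup {x : EReal | ∃ b : ℕ → ℂ,
        (Summable fun n : ℕ => ‖b (n + 1)‖ ^ 2 / a (n + 1)) ∧
        x = sigmaA (fun n => ‖b n‖)} = sigmaA a ∧
    ∀ ε : ℝ, 0 < ε → ∀ σf : ℝ, sigmaA a = (σf : EReal) →
      (Summable fun n : ℕ =>
        (a (n + 1) * ((n + 1 : ℕ) : ℝ) ^ (-(σf / 2 + ε))) ^ 2 / a (n + 1)) ∧
      sigmaA (fun n => a n * (n : ℝ) ^ (-(σf / 2 + ε))) = ((σf / 2 - ε : ℝ) : EReal) := by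
  have ha : ∀ n, 0 < a (n + 1) := fun n => hpos (n + 1) (Nat.le_add_left 1 n)
  have hsup : sSup {x : EReal | ∃ b : ℕ → ℂ,
      (Summable fun n : ℕ => ‖b (n + 1)‖ ^ 2 / a (n + 1)) ∧
      x = sigmaA (fun n => ‖b n‖)} = sigmaA a / 2 := by
    refine le_antisymm (sSup_le ?_) (EReal.ge_of_forall_gt_iff_ge.mp fun z hz => ?_)
    · rintro _ ⟨b, hb, rfl⟩
      exact sigmaA_norm_le_half_sigmaA ha hb
    · rw [EReal.lt_div_iff two_pos (EReal.coe_ne_top 2)] at hz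
      obtain ⟨σf, hσf⟩ : ∃ σf : ℝ, sigmaA a = σf :=
        ⟨_, (EReal.coe_toReal hfin.ne (ne_bot_of_gt hz)).symm⟩
      rw [hσf] at hz
      obtain ⟨b, hb, hσb⟩ := exists_sigmaA_norm_eq ha hσf (t := σf - z)
        (by linarith [(EReal.coe_lt_coe_iff (x := z * 2)).mp hz])
      exact le_sSup ⟨b, hb, by rw [hσb, sub_sub_cancel]⟩
  refine ⟨by rw [hsup, EReal.mul_div_cancel (b := 2) (EReal.coe_ne_bot 2) (EReal.coe_ne_top 2)
    two_ne_zero], fun ε hε σf hσf => ⟨summable_mul_rpow_neg_sq_div ha ?_, ?_⟩⟩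
  · rw [hσf, EReal.coe_lt_coe_iff]
    linarith
  · rw [sigmaA_mul_rpow_neg, hσf, ← EReal.coe_sub]
    congr 1
    ring
end
end
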